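/- arXiv:1406.2214 — 8 statements merged into one kernel-verified Lean document; each statement's English description precedes it below -/
import Mathlib

section
/- Let p ≥ 1 be an integer, let k0,...,k(p-1) be positive integers, let t be a rational number, and let g0,...,gp be the slope sequence determined by these data. Then g_p + g_(p-1) + 1 = (𝒫(k0,...,k(p-1)) + 1)·t − 𝒫(k1,...,k(p-1)). (The left-hand side is the multiplicity r(p) of the root in the anticanonical class of the corresponding intermediate Kato surface.) -/
/-- `fpol k n = f(k 0, ..., k (n-1))`, the continuant-type polynomial:
`f() = 1`, `f(X₁) = X₁`, `f(X₁,...,Xₙ) = Xₙ·f(X₁,...,Xₙ₋₁) + f(X₁,...,Xₙ₋₂)`. -/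
def fpol (k : ℕ → ℤ) : ℕ → ℤ
  | 0 => 1
  | 1 => k 0
  | n + 2 => k (n + 1) * fpol k (n + 1) + fpol k n

/-- `Ppol k n = 𝒫(k 0, ..., k (n-1))`:
`𝒫() = 0`, `𝒫(X₁,...,Xₙ) = Xₙ·f(X₁,...,Xₙ₋₁) + 𝒫(X₁,...,Xₙ₋₁)`. -/
def Ppol (k : ℕ → ℤ) : ℕ → ℤ
  | 0 => 0
  | n + 1 => k n * fpol k n + Ppol k n

/-- The slope sequence: `g 0 = t`, `g 1 = k₀·t - 1`, `g (j+1) = kⱼ·g j + g (j-1)`. -/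
def gslope (k : ℕ → ℤ) (t : ℚ) : ℕ → ℚ
  | 0 => t
  | 1 => (k 0 : ℚ) * t - 1
  | j + 2 => (k (j + 1) : ℚ) * gslope k t (j + 1) + gslope k t j

lemma gslope_eq (k : ℕ → ℤ) (t : ℚ) :
    ∀ j, gslope k t (j + 1) = (fpol k (j + 1) : ℚ) * t - (fpol (fun i => k (i + 1)) j : ℚ)
  | 0 => by simp [gslope, fpol]
  | 1 => by simp [gslope, fpol]; ring
  | j + 2 => by
    have h1 := gslope_eq k t (j + 1)
    have h2 := gslope_eq k t j
    show (k (j + 2) : ℚ) * gslope k t (j + 2) + gslope k t (j + 1) = _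
    rw [h1, h2]
    show _ = ((k (j + 2) * fpol k (j + 2) + fpol k (j + 1) : ℤ) : ℚ) * t -
      ((k (j + 2) * fpol (fun i => k (i + 1)) (j + 1) + fpol (fun i => k (i + 1)) j : ℤ) : ℚ)
    push_cast; ring

lemma fpol_add (k : ℕ → ℤ) : ∀ n, fpol k (n + 1) + fpol k n = Ppol k (n + 1) + 1
  | 0 => by simp [fpol, Ppol]
  | n + 1 => by
    have h := fpol_add k n
    show k (n + 1) * fpol k (n + 1) + fpol k n + fpol k (n + 1) =
      k (n + 1) * fpol k (n + 1) + Ppol k (n + 1) + 1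
    omega

theorem stmt1 (p : ℕ) (hp : 1 ≤ p) (k : ℕ → ℤ) (hk : ∀ i < p, 0 < k i) (t : ℚ) :
    gslope k t p + gslope k t (p - 1) + 1 =
      ((Ppol k p : ℚ) + 1) * t - (Ppol (fun i => k (i + 1)) (p - 1) : ℚ) := by
  match p, hp with
  | 1, _ => simp [gslope, fpol, Ppol]; ring
  | q + 2, _ =>
    show gslope k t (q + 2) + gslope k t (q + 1) + 1 = ((Ppol k (q + 2) : ℚ) + 1) * t - (Ppol (fun i => k (i + 1)) (q + 1) : ℚ)
    rw [gslope_eq k t (q + 1), gslope_eq k t q]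
    have h1 := fpol_add k (q + 1)
    have h2 := fpol_add (fun i => k (i + 1)) q
    have e1 : (fpol k (q + 2) : ℚ) + fpol k (q + 1) = (Ppol k (q + 2) : ℚ) + 1 := by
      exact_mod_cast congrArg (Int.cast : ℤ → ℚ) h1
    have e2 : (fpol (fun i => k (i + 1)) (q + 1) : ℚ) + fpol (fun i => k (i + 1)) q =
        (Ppol (fun i => k (i + 1)) (q + 1) : ℚ) + 1 := by
      exact_mod_cast congrArg (Int.cast : ℤ → ℚ) h2
    linear_combination t * e1 - e2
end

section
/- Let p ≥ 1 be an integer and k0,...,k(p-1) positive integers. Then 𝒫(k0,...,k(p-1)) divides 1 + 𝒫(k1,...,k(p-1)) if and only if k0 = 1 and p ≤ 2. (Equivalently: an intermediate Kato surface with one branch and with Dloussky sequence [s_{k0} ... s_{k(p-1)} r_1], i.e. whose root is a black node, has index 1 exactly when its Dloussky sequence has the form [3 s_{k1} 2].) -/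
lemma fpol_pos (k : ℕ → ℤ) : ∀ n, (∀ i < n, 0 < k i) → 0 < fpol k n
  | 0, _ => by simp [fpol]
  | 1, h => by simpa [fpol] using h 0 (by norm_num)
  | (n+2), h => by
    have h1 := fpol_pos k (n+1) (fun i hi => h i (by omega))
    have h2 := fpol_pos k n (fun i hi => h i (by omega))
    have hk := h (n+1) (by omega)
    simp only [fpol]
    nlinarith [mul_pos hk h1]

lemma Ppol_eq (k : ℕ → ℤ) : ∀ n, Ppol k (n+1) = fpol k (n+1) + fpol k n - 1
  | 0 => by simp [Ppol, fpol]
  | n+1 => by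
    have ih := Ppol_eq k n
    simp only [Ppol, fpol] at *
    linarith

lemma fpol_shift (k : ℕ → ℤ) : ∀ n,
    fpol k (n+2) = k 0 * fpol (fun i => k (i+1)) (n+1) + fpol (fun i => k (i+2)) n
  | 0 => by simp [fpol]; ring
  | 1 => by simp [fpol]; ring
  | (n+2) => by
    have h1 := fpol_shift k n
    have h2 := fpol_shift k (n+1)
    simp only [fpol] at h1 h2 ⊢
    linear_combination k (n+3) * h2 + h1

theorem stmt5 (p : ℕ) (hp : 1 ≤ p) (k : ℕ → ℤ) (hk : ∀ i < p, 0 < k i) :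
    Ppol k p ∣ (1 + Ppol (fun i => k (i + 1)) (p - 1)) ↔ k 0 = 1 ∧ p ≤ 2 := by
  rcases p with _ | _ | _ | m
  · omega
  · -- p = 1
    have hk0 : 0 < k 0 := hk 0 (by omega)
    simp only [Ppol, fpol]
    constructor
    · intro hd
      refine ⟨?_, by omega⟩
      have : k 0 ∣ 1 := by simpa [Ppol] using hd
      exact Int.eq_one_of_dvd_one hk0.le this
    · rintro ⟨h1, -⟩
      simp [h1]
  · -- p = 2
    have hk0 : 0 < k 0 := hk 0 (by omega)
    have hk1 : 0 < k 1 := hk 1 (by omega)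
    simp only [Ppol, fpol]
    constructor
    · intro hd
      refine ⟨?_, by omega⟩
      have hpos : (0:ℤ) < 1 + (k 1 * 1 + 0) := by linarith
      have hle := Int.le_of_dvd hpos hd
      nlinarith
    · rintro ⟨h1, -⟩
      rw [h1]
      exact ⟨1, by ring⟩
  · -- p = m + 3
    have hk0 : 0 < k 0 := hk 0 (by omega)
    have hg2 : 0 < fpol (fun i => k (i+1)) (m+2) :=
      fpol_pos _ _ (fun i hi => hk (i+1) (by omega))
    have hg1 : 0 < fpol (fun i => k (i+1)) (m+1) :=
      fpol_pos _ _ (fun i hi => hk (i+1) (by omega))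
    have hh1 : 0 < fpol (fun i => k (i+2)) (m+1) :=
      fpol_pos _ _ (fun i hi => hk (i+2) (by omega))
    have hh0 : 0 < fpol (fun i => k (i+2)) m :=
      fpol_pos _ _ (fun i hi => hk (i+2) (by omega))
    have e1 : fpol k (m+3) = k 0 * fpol (fun i => k (i+1)) (m+2) + fpol (fun i => k (i+2)) (m+1) :=
      fpol_shift k (m+1)
    have e2 : fpol k (m+2) = k 0 * fpol (fun i => k (i+1)) (m+1) + fpol (fun i => k (i+2)) m :=
      fpol_shift k m
    have eP : Ppol k (m+3) = fpol k (m+3) + fpol k (m+2) - 1 := Ppol_eq k (m+2)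
    have eQ : Ppol (fun i => k (i+1)) (m+2)
        = fpol (fun i => k (i+1)) (m+2) + fpol (fun i => k (i+1)) (m+1) - 1 := Ppol_eq _ (m+1)
    have t1 : fpol (fun i => k (i+1)) (m+2) ≤ k 0 * fpol (fun i => k (i+1)) (m+2) :=
      le_mul_of_one_le_left hg2.le hk0
    have t2 : fpol (fun i => k (i+1)) (m+1) ≤ k 0 * fpol (fun i => k (i+1)) (m+1) :=
      le_mul_of_one_le_left hg1.le hk0
    constructor
    · intro hd
      exfalso
      have hQpos : (0:ℤ) < 1 + Ppol (fun i => k (i+1)) (m + 3 - 1) := by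
        rw [show m + 3 - 1 = m + 2 from rfl, eQ]; linarith
      have hle := Int.le_of_dvd hQpos hd
      rw [show m + 3 - 1 = m + 2 from rfl] at hle
      linarith
    · rintro ⟨-, h2⟩
      omega
end

section
/- (Duality lemma.) Let p ≥ 1 be an integer, k0,...,k(p-1) positive integers, t a rational number, and let g, A and C be as in the Black-lemma setup. Then A_j = 1 + g(2j+1) for every j with 1 ≤ 2j+1 ≤ p, and C_j = 1 + g(2j) for every j with 0 ≤ 2j ≤ p. (This expresses the duality between multiplicities of black nodes in the branch and slopes on the cycle of an intermediate Kato surface with one branch, and vice versa.) -/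
/-- Black-lemma setup: `g 0 = t`, `g 1 = k₀·t − 1`, and further values of the
slope sequence `g` determined by the adjunction (Black lemma) recursions, with
`A j`, `C j` the multiplicities of the branch resp. cycle black nodes. -/
theorem stmt8 (p : ℕ) (hp : 1 ≤ p) (k : ℕ → ℤ) (hk : ∀ i < p, 0 < k i) (t : ℚ)
    (g A C : ℕ → ℚ)
    (hA : ∀ j, A j = ∑ i ∈ Finset.range (j + 1), (k (2 * i) : ℚ) * g (2 * i))
    (hC : ∀ j, C j = (t + 1) + ∑ i ∈ Finset.range j, (k (2 * i + 1) : ℚ) * g (2 * i + 1))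
    (hg0 : g 0 = t) (hg1 : g 1 = (k 0 : ℚ) * t - 1)
    (hgeven : ∀ j, 1 ≤ j → 2 * j ≤ p →
      g (2 * j) = g (2 * j - 2) + (k (2 * j - 1) : ℚ) * (A (j - 1) - 1))
    (hgodd : ∀ j, 1 ≤ j → 2 * j + 1 ≤ p →
      g (2 * j + 1) = g (2 * j - 1) + (k (2 * j) : ℚ) * (C j - 1)) :
    (∀ j, 2 * j + 1 ≤ p → A j = 1 + g (2 * j + 1)) ∧
    (∀ j, 2 * j ≤ p → C j = 1 + g (2 * j)) := by
  have key : ∀ j, (2 * j ≤ p → C j = 1 + g (2 * j)) ∧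
      (2 * j + 1 ≤ p → A j = 1 + g (2 * j + 1)) := by
    intro j
    induction j with
    | zero =>
      constructor
      · intro _
        simp [hC, hg0]; ring
      · intro _
        simp [hA, hg0, hg1]
    | succ n ih =>
      have hQ : 2 * (n + 1) ≤ p → C (n + 1) = 1 + g (2 * (n + 1)) := by
        intro h
        have hP := ih.2 (by omega)
        have hQn := ih.1 (by omega)
        have hge := hgeven (n + 1) (by omega) h
        have e1 : 2 * (n + 1) - 2 = 2 * n := by omega
        have e2 : 2 * (n + 1) - 1 = 2 * n + 1 := by omega
        have e3 : (n + 1) - 1 = n := by omega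
        rw [e1, e2, e3] at hge
        have hCd : C (n + 1) = C n + (k (2 * n + 1) : ℚ) * g (2 * n + 1) := by
          rw [hC, hC, Finset.sum_range_succ]; ring
        rw [hCd, hQn, hge, hP]; ring
      refine ⟨hQ, ?_⟩
      intro h
      have hQ1 := hQ (by omega)
      have hgo := hgodd (n + 1) (by omega) h
      have e2 : 2 * (n + 1) - 1 = 2 * n + 1 := by omega
      rw [e2] at hgo
      have hP := ih.2 (by omega)
      have hAd : A (n + 1) = A n + (k (2 * (n + 1)) : ℚ) * g (2 * (n + 1)) := by
        rw [hA, hA, Finset.sum_range_succ]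
      rw [hAd, hP, hgo, hQ1]; ring
  exact ⟨fun j h => (key j).2 h, fun j h => (key j).1 h⟩
end

section
/- Let p ≥ 1 be an integer, k0,...,k(p-1) positive integers, t a rational number, and let g be as in the Black-lemma setup. Then g(j+1) − g(j-1) = kj·gj for all j with 1 ≤ j ≤ p−1. (Thus the slopes of the anticanonical multiplicities of an intermediate Kato surface with one branch satisfy a single three-term recursion.) -/
/-- Black-lemma setup as in the Duality lemma: the slopes satisfy the
three-term recursion `g (j+1) − g (j-1) = kⱼ · g j` for `1 ≤ j ≤ p − 1`. -/
theorem stmt9 (p : ℕ) (hp : 1 ≤ p) (k : ℕ → ℤ) (hk : ∀ i < p, 0 < k i) (t : ℚ)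
    (g A C : ℕ → ℚ)
    (hA : ∀ j, A j = ∑ i ∈ Finset.range (j + 1), (k (2 * i) : ℚ) * g (2 * i))
    (hC : ∀ j, C j = (t + 1) + ∑ i ∈ Finset.range j, (k (2 * i + 1) : ℚ) * g (2 * i + 1))
    (hg0 : g 0 = t) (hg1 : g 1 = (k 0 : ℚ) * t - 1)
    (hgeven : ∀ j, 1 ≤ j → 2 * j ≤ p →
      g (2 * j) = g (2 * j - 2) + (k (2 * j - 1) : ℚ) * (A (j - 1) - 1))
    (hgodd : ∀ j, 1 ≤ j → 2 * j + 1 ≤ p →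
      g (2 * j + 1) = g (2 * j - 1) + (k (2 * j) : ℚ) * (C j - 1)) :
    ∀ j, 1 ≤ j → j + 1 ≤ p → g (j + 1) - g (j - 1) = (k j : ℚ) * g j := by
  -- Key: A m - 1 = g (2m+1) and C m - 1 = g (2m), by simultaneous induction.
  have aux : ∀ m, (2 * m + 1 ≤ p → A m - 1 = g (2 * m + 1)) ∧
      (2 * m ≤ p → C m - 1 = g (2 * m)) := by
    intro m
    induction m with
    | zero =>
      constructor
      · intro _
        simp [hA 0, hg0, hg1]
      · intro _
        simp [hC 0, hg0]
    | succ m ih =>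
      have hCstep : 2 * (m + 1) ≤ p → C (m + 1) - 1 = g (2 * (m + 1)) := by
        intro hle
        have hAm : A m - 1 = g (2 * m + 1) := ih.1 (by omega)
        have hCm : C m - 1 = g (2 * m) := ih.2 (by omega)
        have he := hgeven (m + 1) (by omega) hle
        have e1 : 2 * (m + 1) - 2 = 2 * m := by omega
        have e2 : 2 * (m + 1) - 1 = 2 * m + 1 := by omega
        have e3 : m + 1 - 1 = m := by omega
        rw [e1, e2, e3] at he
        have hsum : C (m + 1) = C m + (k (2 * m + 1) : ℚ) * g (2 * m + 1) := by
          rw [hC (m + 1), hC m, Finset.sum_range_succ]; ring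
        rw [hsum, he, ← hAm, ← hCm]; ring
      refine ⟨?_, hCstep⟩
      intro hle
      have hAm : A m - 1 = g (2 * m + 1) := ih.1 (by omega)
      have hC1 : C (m + 1) - 1 = g (2 * (m + 1)) := hCstep (by omega)
      have ho := hgodd (m + 1) (by omega) (by omega)
      have e2 : 2 * (m + 1) - 1 = 2 * m + 1 := by omega
      rw [e2] at ho
      have hsum : A (m + 1) = A m + (k (2 * (m + 1)) : ℚ) * g (2 * (m + 1)) := by
        rw [hA (m + 1), hA m, Finset.sum_range_succ]
      rw [hsum, ← hC1] at *
      rw [ho, ← hAm, ← hC1]; ring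
  intro j hj hjp
  rcases Nat.even_or_odd j with ⟨m, hm⟩ | ⟨m, hm⟩
  · -- j = 2m even, m ≥ 1
    subst hm
    have hm1 : 1 ≤ m := by omega
    have ho := hgodd m hm1 (by omega)
    have hAC : C m - 1 = g (m + m) := by
      have := (aux m).2 (by omega)
      rw [this]; ring_nf
    have e1 : m + m - 1 = 2 * m - 1 := by omega
    have e2 : m + m + 1 = 2 * m + 1 := by omega
    have e3 : m + m = 2 * m := by omega
    rw [e1, e2, e3, ho, ← e3, hAC]; ring
  · -- j = 2m+1 odd
    subst hm
    have he := hgeven (m + 1) (by omega) (by omega)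
    have e1 : 2 * (m + 1) - 2 = 2 * m := by omega
    have e2 : 2 * (m + 1) - 1 = 2 * m + 1 := by omega
    have e3 : m + 1 - 1 = m := by omega
    rw [e1, e2, e3] at he
    have hAm : A m - 1 = g (2 * m + 1) := (aux m).1 (by omega)
    have e4 : 2 * m + 1 + 1 = 2 * (m + 1) := by omega
    have e5 : 2 * m + 1 - 1 = 2 * m := by omega
    rw [e4, e5, he, hAm]; ring
end

section
/- For every n ≥ 1 and all integers X1,...,Xn, 𝒫(X1,...,Xn) equals the sum, over all admissible subsets B of {1,...,n}, of the products ∏_{j ∈ {1,...,n} \ B} Xj. (This identifies the recursively defined multilinear form 𝒫 with the Dloussky polynomial 𝒫_{{n}}.) -/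
/-- A building block for admissible subsets of `{1,...,n}`: either the
singleton `{n}` or a pair `{i, i+1}` with `1 ≤ i ≤ n − 1`. -/
def IsBlock (n : ℕ) (b : Finset ℕ) : Prop :=
  b = {n} ∨ ∃ i, 1 ≤ i ∧ i + 1 ≤ n ∧ b = ({i, i + 1} : Finset ℕ)

/-- `B ⊆ {1,...,n}` is admissible if it is a proper subset of `{1,...,n}` and can be
written as a disjoint union of building blocks (the empty union being allowed). -/
def Admissible (n : ℕ) (B : Finset ℕ) : Prop :=
  B ≠ Finset.Icc 1 n ∧
  ∃ S : Finset (Finset ℕ),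
    (∀ b ∈ S, IsBlock n b) ∧
    (S : Set (Finset ℕ)).PairwiseDisjoint id ∧
    B = S.sup id


namespace S
open Finset

def Mset : ℕ → Finset (Finset ℕ)
  | 0 => {∅}
  | 1 => {∅}
  | n + 2 => Mset (n + 1) ∪ (Mset n).image (fun B => B ∪ {n + 1, n + 2})

lemma Mset_subset : ∀ n, ∀ B ∈ Mset n, B ⊆ Finset.Icc 1 n
  | 0, B, hB => by simp [Mset] at hB; simp [hB]
  | 1, B, hB => by simp [Mset] at hB; simp [hB]
  | n+2, B, hB => by
    rw [Mset, mem_union] at hB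
    rcases hB with h | h
    · exact (Mset_subset (n+1) B h).trans (Icc_subset_Icc_right (by omega))
    · obtain ⟨C, hC, rfl⟩ := mem_image.mp h
      have h2 := Mset_subset n C hC
      intro x hx
      simp only [mem_union, mem_insert, mem_singleton] at hx
      rcases hx with h | h | h
      · have := h2 h; simp only [mem_Icc] at this ⊢; omega
      · simp only [mem_Icc]; omega
      · simp only [mem_Icc]; omega

lemma Mset_even : ∀ n, ∀ B ∈ Mset n, Even B.card
  | 0, B, hB => by simp [Mset] at hB; simp [hB]
  | 1, B, hB => by simp [Mset] at hB; simp [hB]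
  | n+2, B, hB => by
    rw [Mset, mem_union] at hB
    rcases hB with h | h
    · exact Mset_even (n+1) B h
    · obtain ⟨C, hC, rfl⟩ := mem_image.mp h
      have h2 := Mset_subset n C hC
      have hd : Disjoint C ({n+1, n+2} : Finset ℕ) := by
        rw [disjoint_left]
        intro a ha hc
        have := h2 ha
        simp only [mem_Icc] at this
        simp only [mem_insert, mem_singleton] at hc
        omega
      rw [card_union_of_disjoint hd]
      have : ({n+1, n+2} : Finset ℕ).card = 2 := by
        rw [card_insert_of_notMem (by simp), card_singleton]
      rw [this]
      obtain ⟨m, hm⟩ := Mset_even n C hC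
      exact ⟨m+1, by omega⟩


lemma fpol_sum (X : ℕ → ℤ) : ∀ n, fpol (fun i => X (i + 1)) n
    = ∑ B ∈ Mset n, ∏ j ∈ Finset.Icc 1 n \ B, X j
  | 0 => by simp [Mset, fpol]
  | 1 => by simp [Mset, fpol]
  | n+2 => by
    have hdisj : Disjoint (Mset (n+1)) ((Mset n).image (fun B => B ∪ {n + 1, n + 2})) := by
      rw [disjoint_left]
      intro B h1 h2
      obtain ⟨C, _, rfl⟩ := mem_image.mp h2
      have := Mset_subset (n+1) _ h1 (show n+2 ∈ C ∪ {n+1,n+2} by simp)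
      simp only [mem_Icc] at this; omega
    rw [Mset, sum_union hdisj, fpol, fpol_sum X (n+1), fpol_sum X n]
    have himg : ∑ B ∈ (Mset n).image (fun B => B ∪ {n + 1, n + 2}),
        ∏ j ∈ Finset.Icc 1 (n+2) \ B, X j
        = ∑ C ∈ Mset n, ∏ j ∈ Finset.Icc 1 n \ C, X j := by
      rw [sum_image]
      · apply sum_congr rfl
        intro C hC
        apply prod_congr _ (fun _ _ => rfl)
        ext a
        have h2 := Mset_subset n C hC
        simp only [mem_sdiff, mem_Icc, mem_union, mem_insert, mem_singleton]
        constructor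
        · rintro ⟨⟨h1, h3⟩, h4⟩
          push_neg at h4
          exact ⟨⟨h1, by omega⟩, h4.1⟩
        · rintro ⟨⟨h1, h3⟩, h4⟩
          exact ⟨⟨h1, by omega⟩, by push_neg; exact ⟨h4, by omega, by omega⟩⟩
      · intro C hC C' hC' h
        have h2 := Mset_subset n C hC
        have h2' := Mset_subset n C' hC'
        ext a
        constructor
        · intro ha
          have : a ∈ C' ∪ {n+1,n+2} := (show C ∪ {n+1,n+2} = C' ∪ {n+1,n+2} from h) ▸ (mem_union_left _ ha)
          have hle := h2 ha
          simp only [mem_Icc] at hle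
          simp only [mem_union, mem_insert, mem_singleton] at this
          rcases this with h' | h' | h' <;> first | exact h' | omega
        · intro ha
          have : a ∈ C ∪ {n+1,n+2} := (show C ∪ {n+1,n+2} = C' ∪ {n+1,n+2} from h) ▸ (mem_union_left _ ha)
          have hle := h2' ha
          simp only [mem_Icc] at hle
          simp only [mem_union, mem_insert, mem_singleton] at this
          rcases this with h' | h' | h' <;> first | exact h' | omega
    rw [himg]
    congr 1
    rw [mul_sum]
    apply sum_congr rfl
    intro B hB
    have h2 := Mset_subset (n+1) B hB
    have hset : Finset.Icc 1 (n+2) \ B = insert (n+2) (Finset.Icc 1 (n+1) \ B) := by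
      ext a
      simp only [mem_sdiff, mem_Icc, mem_insert]
      constructor
      · rintro ⟨⟨h1, h3⟩, h4⟩
        by_cases h : a = n+2
        · exact Or.inl h
        · exact Or.inr ⟨⟨h1, by omega⟩, h4⟩
      · rintro (rfl | ⟨⟨h1, h3⟩, h4⟩)
        · refine ⟨⟨by omega, le_refl _⟩, fun hc => ?_⟩
          have := h2 hc; simp only [mem_Icc] at this; omega
        · exact ⟨⟨h1, by omega⟩, h4⟩
    rw [hset, prod_insert (by simp)]


def Matchy (n : ℕ) (B : Finset ℕ) : Prop :=
  ∃ S : Finset (Finset ℕ),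
    (∀ b ∈ S, ∃ i, 1 ≤ i ∧ i + 1 ≤ n ∧ b = ({i, i + 1} : Finset ℕ)) ∧
    (S : Set (Finset ℕ)).PairwiseDisjoint id ∧ B = S.sup id

lemma mem_of_matchy : ∀ n B, Matchy n B → B ∈ Mset n
  | 0, B, ⟨S, hS, _, hB⟩ => by
    have : S = ∅ := by
      rw [eq_empty_iff_forall_notMem]
      intro b hb
      obtain ⟨i, h1, h2, _⟩ := hS b hb
      omega
    subst this hB
    simp [Mset]
  | 1, B, ⟨S, hS, _, hB⟩ => by
    have : S = ∅ := by
      rw [eq_empty_iff_forall_notMem]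
      intro b hb
      obtain ⟨i, h1, h2, _⟩ := hS b hb
      omega
    subst this hB
    simp [Mset]
  | n+2, B, ⟨S, hS, hdisj, hB⟩ => by
    by_cases hmem : n + 2 ∈ B
    · obtain ⟨b, hbS, hb⟩ := Finset.mem_sup.mp (hB ▸ hmem)
      obtain ⟨i, hi1, hi2, rfl⟩ := hS b hbS
      have hieq : i = n + 1 := by
        simp only [id_eq, mem_insert, mem_singleton] at hb
        omega
      subst hieq
      set S' := S.erase {n+1, n+1+1} with hS'
      have hins : S = insert {n+1, n+1+1} S' := (Finset.insert_erase hbS).symm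
      have hsup : B = {n+1, n+1+1} ∪ S'.sup id := by
        rw [hB, hins, Finset.sup_insert]; rfl
      have hd' : ∀ b' ∈ S', Disjoint ({n+1, n+1+1} : Finset ℕ) (b' : Finset ℕ) := by
        intro b' hb'
        have hne : b' ≠ {n+1, n+1+1} := (Finset.ne_of_mem_erase hb')
        exact (hdisj hbS (Finset.mem_of_mem_erase hb') (fun h => hne h.symm))
      have hmatch : Matchy n (S'.sup id) := by
        refine ⟨S', ?_, hdisj.subset (by simp [hS', Finset.coe_subset, Finset.erase_subset]), rfl⟩
        intro b' hb'
        obtain ⟨i', h1, h2, rfl⟩ := hS b' (Finset.mem_of_mem_erase hb')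
        refine ⟨i', h1, ?_, rfl⟩
        have := hd' _ hb'
        rw [Finset.disjoint_right] at this
        have hni : i' + 1 ∉ ({n+1, n+1+1} : Finset ℕ) := this (by simp)
        have hni' : i' ∉ ({n+1, n+1+1} : Finset ℕ) := this (by simp)
        simp only [mem_insert, mem_singleton] at hni hni'
        omega
      have hmem' := mem_of_matchy n _ hmatch
      rw [Mset, mem_union]
      right
      refine mem_image.mpr ⟨S'.sup id, hmem', ?_⟩
      rw [hsup, union_comm]
    · apply Finset.mem_union_left
      apply mem_of_matchy (n+1)
      refine ⟨S, ?_, hdisj, hB⟩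
      intro b hb
      obtain ⟨i, h1, h2, rfl⟩ := hS b hb
      refine ⟨i, h1, ?_, rfl⟩
      have : i + 1 ≠ n + 2 := by
        intro h
        apply hmem
        rw [hB]
        exact Finset.mem_sup.mpr ⟨_, hb, by simp [h]⟩
      omega

lemma matchy_of_mem : ∀ n B, B ∈ Mset n → Matchy n B
  | 0, B, hB => by
    simp only [Mset, mem_singleton] at hB
    exact ⟨∅, by simp, by simp, by simp [hB]⟩
  | 1, B, hB => by
    simp only [Mset, mem_singleton] at hB
    exact ⟨∅, by simp, by simp, by simp [hB]⟩
  | n+2, B, hB => by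
    rw [Mset, mem_union] at hB
    rcases hB with h | h
    · obtain ⟨S, hS, hd, hB⟩ := matchy_of_mem (n+1) B h
      refine ⟨S, ?_, hd, hB⟩
      intro b hb
      obtain ⟨i, h1, h2, rfl⟩ := hS b hb
      exact ⟨i, h1, by omega, rfl⟩
    · obtain ⟨C, hC, rfl⟩ := mem_image.mp h
      obtain ⟨S, hS, hd, hCs⟩ := matchy_of_mem n C hC
      have hsubC : ∀ b ∈ S, (b : Finset ℕ) ⊆ Finset.Icc 1 n := by
        intro b hb
        obtain ⟨i, h1, h2, rfl⟩ := hS b hb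
        intro a ha
        simp only [mem_insert, mem_singleton] at ha
        simp only [mem_Icc]
        omega
      have hnotmem : ({n+1, n+2} : Finset ℕ) ∉ S := by
        intro hmem
        have := hsubC _ hmem (show n+1 ∈ ({n+1,n+2} : Finset ℕ) by simp)
        simp only [mem_Icc] at this; omega
      refine ⟨insert {n+1, n+2} S, ?_, ?_, ?_⟩
      · intro b hb
        rcases Finset.mem_insert.mp hb with rfl | hb
        · exact ⟨n+1, by omega, by omega, rfl⟩
        · obtain ⟨i, h1, h2, rfl⟩ := hS b hb
          exact ⟨i, h1, by omega, rfl⟩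
      · rw [Finset.coe_insert]
        refine hd.insert ?_
        intro b hb _
        rw [Finset.disjoint_right]
        intro a ha hc
        simp only [id_eq] at ha hc
        have := hsubC b hb ha
        simp only [mem_Icc] at this
        simp only [mem_insert, mem_singleton] at hc
        omega
      · rw [Finset.sup_insert, ← hCs, union_comm]
        rfl


lemma blocky_iff (n : ℕ) (hn : 1 ≤ n) (B : Finset ℕ) :
    (∃ S : Finset (Finset ℕ), (∀ b ∈ S, IsBlock n b) ∧
      (S : Set (Finset ℕ)).PairwiseDisjoint id ∧ B = S.sup id)
    ↔ B ∈ Mset n ∪ (Mset (n-1)).image (insert n) := by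
  constructor
  · rintro ⟨S, hS, hd, rfl⟩
    by_cases h : ({n} : Finset ℕ) ∈ S
    · rw [mem_union]
      right
      set S' := S.erase {n} with hS'
      have hsup : S.sup id = insert n (S'.sup id) := by
        conv_lhs => rw [(Finset.insert_erase h).symm]
        rw [Finset.sup_insert, Finset.insert_eq]
        rfl
      have hmatch : Matchy (n-1) (S'.sup id) := by
        refine ⟨S', ?_, hd.subset (by simp [hS', Finset.coe_subset, Finset.erase_subset]), rfl⟩
        intro b hb
        have hne : b ≠ {n} := Finset.ne_of_mem_erase hb
        rcases hS b (Finset.mem_of_mem_erase hb) with h' | ⟨i, h1, h2, rfl⟩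
        · exact absurd h' hne
        · refine ⟨i, h1, ?_, rfl⟩
          have hdisj : Disjoint ({i, i+1} : Finset ℕ) ({n} : Finset ℕ) :=
            hd (Finset.mem_of_mem_erase hb) h hne
          rw [Finset.disjoint_right] at hdisj
          have h3 : n ∉ ({i, i+1} : Finset ℕ) := hdisj (by simp)
          simp only [mem_insert, mem_singleton] at h3
          omega
      exact mem_image.mpr ⟨S'.sup id, mem_of_matchy _ _ hmatch, hsup.symm⟩
    · rw [mem_union]
      left
      apply mem_of_matchy
      refine ⟨S, ?_, hd, rfl⟩
      intro b hb
      rcases hS b hb with h' | h'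
      · exact absurd (h' ▸ hb) h
      · exact h'
  · intro h
    rw [mem_union] at h
    rcases h with h | h
    · obtain ⟨S, hS, hd, hB⟩ := matchy_of_mem n B h
      exact ⟨S, fun b hb => Or.inr (hS b hb), hd, hB⟩
    · obtain ⟨M, hM, rfl⟩ := mem_image.mp h
      obtain ⟨S, hS, hd, hMs⟩ := matchy_of_mem (n-1) M hM
      have hsubC : ∀ b ∈ S, (b : Finset ℕ) ⊆ Finset.Icc 1 (n-1) := by
        intro b hb
        obtain ⟨i, h1, h2, rfl⟩ := hS b hb
        intro a ha
        simp only [mem_insert, mem_singleton] at ha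
        simp only [mem_Icc]
        omega
      have hns : ({n} : Finset ℕ) ∉ S := by
        intro hmem
        have := hsubC _ hmem (show n ∈ ({n} : Finset ℕ) by simp)
        simp only [mem_Icc] at this; omega
      refine ⟨insert {n} S, ?_, ?_, ?_⟩
      · intro b hb
        rcases Finset.mem_insert.mp hb with rfl | hb
        · exact Or.inl rfl
        · obtain ⟨i, h1, h2, rfl⟩ := hS b hb
          exact Or.inr ⟨i, h1, by omega, rfl⟩
      · rw [Finset.coe_insert]
        refine hd.insert ?_
        intro b hb _
        rw [Finset.disjoint_right]
        intro a ha hc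
        simp only [id_eq] at ha hc
        have := hsubC b hb ha
        simp only [mem_Icc] at this
        simp only [mem_singleton] at hc
        omega
      · rw [Finset.sup_insert, ← hMs, Finset.insert_eq]
        rfl

lemma full_even : ∀ n, Even n → Finset.Icc 1 n ∈ Mset n
  | 0, _ => by simp [Mset]
  | 1, h => by simp at h
  | n+2, h => by
    rw [Mset, mem_union]
    right
    refine mem_image.mpr ⟨Finset.Icc 1 n, full_even n (by rcases h with ⟨m, hm⟩; exact ⟨m-1, by omega⟩), ?_⟩
    ext a
    simp only [mem_union, mem_Icc, mem_insert, mem_singleton]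
    omega

lemma full_mem (n : ℕ) (hn : 1 ≤ n) :
    Finset.Icc 1 n ∈ Mset n ∪ (Mset (n-1)).image (insert n) := by
  rcases Nat.even_or_odd n with h | h
  · exact mem_union_left _ (full_even n h)
  · apply mem_union_right
    refine mem_image.mpr ⟨Finset.Icc 1 (n-1), full_even (n-1) ?_, ?_⟩
    · rcases h with ⟨m, hm⟩; exact ⟨m, by omega⟩
    · ext a
      simp only [Finset.mem_insert, mem_Icc]
      omega

open scoped Classical in
lemma filter_eq (n : ℕ) (hn : 1 ≤ n) :
    (Finset.Icc 1 n).powerset.filter (fun B => Admissible n B)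
      = (Mset n ∪ (Mset (n-1)).image (insert n)).erase (Finset.Icc 1 n) := by
  ext B
  rw [mem_filter, mem_powerset, mem_erase]
  constructor
  · rintro ⟨hsub, hne, hbl⟩
    exact ⟨hne, (blocky_iff n hn B).mp hbl⟩
  · rintro ⟨hne, h⟩
    refine ⟨?_, hne, (blocky_iff n hn B).mpr h⟩
    rw [mem_union] at h
    rcases h with h | h
    · exact Mset_subset n B h
    · obtain ⟨M, hM, rfl⟩ := mem_image.mp h
      have := Mset_subset (n-1) M hM
      intro a ha
      rcases Finset.mem_insert.mp ha with rfl | ha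
      · simp only [mem_Icc]; omega
      · have := this ha; simp only [mem_Icc] at this ⊢; omega

lemma Ppol_eq (k : ℕ → ℤ) : ∀ n, 1 ≤ n → Ppol k n + 1 = fpol k n + fpol k (n-1)
  | 1, _ => by simp [Ppol, fpol]
  | n+2, _ => by
    have ih := Ppol_eq k (n+1) (by omega)
    simp only [Nat.add_sub_cancel] at ih
    show Ppol k (n+2) + 1 = fpol k (n+2) + fpol k (n+1)
    rw [Ppol, fpol]
    linarith



end S

open Finset S in
open scoped Classical in
theorem stmt10 (n : ℕ) (hn : 1 ≤ n) (X : ℕ → ℤ) :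
    Ppol (fun i => X (i + 1)) n =
      ∑ B ∈ (Finset.Icc 1 n).powerset.filter (fun B => Admissible n B),
        ∏ j ∈ Finset.Icc 1 n \ B, X j := by
  rw [S.filter_eq n hn]
  rw [Finset.sum_erase_eq_sub (S.full_mem n hn)]
  have hdisj : Disjoint (Mset n) ((Mset (n-1)).image (insert n)) := by
    rw [Finset.disjoint_left]
    intro B h1 h2
    obtain ⟨M, hM, rfl⟩ := mem_image.mp h2
    have heven := S.Mset_even n _ h1
    have hevenM := S.Mset_even (n-1) M hM
    have hnM : n ∉ M := by
      intro h
      have := S.Mset_subset (n-1) M hM h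
      simp only [mem_Icc] at this; omega
    rw [Finset.card_insert_of_notMem hnM] at heven
    rcases heven with ⟨a, ha⟩; rcases hevenM with ⟨b, hb⟩; omega
  rw [Finset.sum_union hdisj]
  have himg : ∑ B ∈ (Mset (n-1)).image (insert n), ∏ j ∈ Finset.Icc 1 n \ B, X j
      = ∑ M ∈ Mset (n-1), ∏ j ∈ Finset.Icc 1 (n-1) \ M, X j := by
    rw [Finset.sum_image ?_]
    · apply Finset.sum_congr rfl
      intro M hM
      apply Finset.prod_congr _ (fun _ _ => rfl)
      have hsub := S.Mset_subset (n-1) M hM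
      ext a
      simp only [Finset.mem_sdiff, mem_Icc, Finset.mem_insert, not_or]
      constructor
      · rintro ⟨⟨h1, h2⟩, h3, h4⟩
        exact ⟨⟨h1, by omega⟩, h4⟩
      · rintro ⟨⟨h1, h2⟩, h3⟩
        exact ⟨⟨h1, by omega⟩, by omega, h3⟩
    · intro M hM M' hM' h
      have hnM : n ∉ M := fun hc => by
        have := S.Mset_subset (n-1) M hM hc; simp only [mem_Icc] at this; omega
      have hnM' : n ∉ M' := fun hc => by
        have := S.Mset_subset (n-1) M' hM' hc; simp only [mem_Icc] at this; omega
      have := congrArg (Finset.erase · n) h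
      simpa [Finset.erase_insert, hnM, hnM'] using this
  rw [himg, ← S.fpol_sum X n, ← S.fpol_sum X (n-1), Finset.sdiff_self,
    Finset.prod_empty]
  have := S.Ppol_eq (fun i => X (i + 1)) n hn
  linarith
end

section
/- (Division lemma.) For every n ≥ 2 and all integers X1,...,Xn, 𝒫(X1,...,Xn) = X1·(𝒫(X2,...,Xn) + 1) + 𝒫(X3,...,Xn), where for n = 2 the last term is 𝒫 of the empty sequence, namely 0. -/
lemma fsplit (X : ℕ → ℤ) : ∀ n : ℕ,
    fpol X (n + 2) = X 0 * fpol (fun i => X (i + 1)) (n + 1) + fpol (fun i => X (i + 2)) n := by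
  intro n
  induction n using Nat.twoStepInduction with
  | zero => simp [fpol]; ring
  | one => simp [fpol]; ring
  | more m ih1 ih2 =>
    show fpol X (m + 4) = _
    rw [show m + 4 = (m + 2) + 2 from rfl, fpol, ih1, ih2]
    simp only [fpol]
    ring

theorem stmt11 (n : ℕ) (hn : 2 ≤ n) (X : ℕ → ℤ) :
    Ppol X n =
      X 0 * (Ppol (fun i => X (i + 1)) (n - 1) + 1) + Ppol (fun i => X (i + 2)) (n - 2) := by
  obtain ⟨m, rfl⟩ : ∃ m, n = m + 2 := ⟨n - 2, by omega⟩
  simp only [Nat.add_sub_cancel, show m + 2 - 1 = m + 1 from rfl]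
  induction m with
  | zero => simp [Ppol, fpol]; ring
  | succ m ih =>
    rw [show m + 1 + 2 = (m + 2) + 1 from rfl, Ppol, fsplit, ih (by omega)]
    simp only [Ppol]
    ring
end

section
/- Let p ≥ 1 be an integer and k0,...,k(p-1) positive integers. Then gcd(𝒫(k0,...,k(p-1)) + 1, 𝒫(k1,...,k(p-1)) + 1) = 1. (In the paper this is the statement gcd(j,k) = 1 for the exponents k = 𝒫(k0,...,k(p-1)) + 1 and j = 𝒫(k1,...,k(p-1)) + 1 of the contracting germ in Favre normal form of a Kato surface with simple Dloussky sequence [s_{k0} ... s_{k(p-1)} r_m].) -/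
lemma ppol_add_one (k : ℕ → ℤ) : ∀ n, Ppol k (n + 1) + 1 = fpol k (n + 1) + fpol k n
  | 0 => by simp [Ppol, fpol]
  | n + 1 => by
    have ih := ppol_add_one k n
    simp only [Ppol, fpol] at *
    linarith

lemma det_id (k : ℕ → ℤ) :
    ∀ n, fpol k (n + 2) * fpol (fun i => k (i + 1)) n
      - fpol k (n + 1) * fpol (fun i => k (i + 1)) (n + 1) = (-1) ^ n
  | 0 => by simp [fpol]; ring
  | 1 => by simp [fpol]; ring
  | n + 2 => by
    have ih := det_id k (n + 1)
    have h1 : fpol k (n + 4) = k (n + 3) * fpol k (n + 3) + fpol k (n + 2) := rfl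
    have h2 : fpol (fun i => k (i + 1)) (n + 3)
        = k (n + 3) * fpol (fun i => k (i + 1)) (n + 2) + fpol (fun i => k (i + 1)) (n + 1) := rfl
    have : ((-1 : ℤ)) ^ (n + 2) = -((-1) ^ (n + 1)) := by ring
    rw [h1, h2, this, ← ih]; ring

theorem stmt12 (p : ℕ) (hp : 1 ≤ p) (k : ℕ → ℤ) (hk : ∀ i < p, 0 < k i) :
    Int.gcd (Ppol k p + 1) (Ppol (fun i => k (i + 1)) (p - 1) + 1) = 1 := by
  match p, hp with
  | 1, _ => simp [Ppol]
  | (t + 2), _ =>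
    set g := fun i => k (i + 1) with hg
    rw [show t + 2 - 1 = t + 1 from rfl]
    rw [← Int.isCoprime_iff_gcd_eq_one]
    refine ⟨(-1) ^ t * fpol g t, (-1) ^ t * (-(fpol k (t + 1))), ?_⟩
    rw [ppol_add_one, ppol_add_one]
    have h := det_id k t
    have hsq : ((-1 : ℤ)) ^ t * ((-1 : ℤ)) ^ t = 1 := by
      rw [← pow_add]; exact Even.neg_one_pow ⟨t, by ring⟩
    calc ((-1:ℤ)) ^ t * fpol g t * (fpol k (t + 1 + 1) + fpol k (t + 1))
          + (-1) ^ t * (-(fpol k (t + 1))) * (fpol g (t + 1) + fpol g t)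
        = (-1) ^ t * (fpol k (t + 2) * fpol g t - fpol k (t + 1) * fpol g (t + 1)) := by ring
      _ = 1 := by rw [h]; exact hsq
end

section
/- The quantity gcd(K, S) is invariant under cyclic permutation of the pairs (Pf, Qf): if P'f = P(f+1) and Q'f = Q(f+1) for 1 ≤ f ≤ N−1, P'N = P1 and Q'N = Q1, and S' = ∑_{h=1}^{N} Q'h·∏_{f=h+1}^{N} (P'f + 1), then ∏_{f=1}^{N} (P'f + 1) − 1 = K and gcd(K, S') = gcd(K, S). (Hence the index of an intermediate Kato surface does not depend on the choice of first tip, even though S does.) -/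
private lemma gcd_add_mul_aux (a b c : ℤ) : Int.gcd a (b + c * a) = Int.gcd a b := by
  have h : ∀ x y z : ℤ, (Int.gcd x y : ℤ) ∣ (Int.gcd x (y + z * x) : ℤ) := by
    intro x y z
    exact Int.dvd_coe_gcd (Int.gcd_dvd_left x y)
      (dvd_add (Int.gcd_dvd_right x y) ((Int.gcd_dvd_left x y).mul_left z))
  apply Nat.dvd_antisymm
  · have := h a (b + c * a) (-c)
    simp only [neg_mul, add_neg_cancel_right] at this
    exact_mod_cast this
  · exact_mod_cast h a b c

private lemma gcd_coprime_mul_aux (a k m : ℤ) (h : IsCoprime a k) :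
    Int.gcd a (k * m) = Int.gcd a m := by
  have hc : Nat.Coprime k.natAbs a.natAbs := by
    rw [Nat.coprime_comm]
    exact Int.isCoprime_iff_gcd_eq_one.mp h
  rw [Int.gcd_def, Int.gcd_def, Int.natAbs_mul]
  exact Nat.Coprime.gcd_mul_left_cancel_right m.natAbs hc

theorem stmt15 (N : ℕ) (hN : 1 ≤ N) (P Q : ℕ → ℤ)
    (hP : ∀ f < N, 0 < P f) (hQ : ∀ f < N, 0 < Q f)
    (K S : ℤ)
    (hK : K = (∏ f ∈ Finset.range N, (P f + 1)) - 1)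
    (hS : S = ∑ h ∈ Finset.range N, Q h * ∏ f ∈ Finset.Ico (h + 1) N, (P f + 1))
    (P' Q' : ℕ → ℤ)
    (hP' : ∀ f, f + 1 < N → P' f = P (f + 1)) (hP'N : P' (N - 1) = P 0)
    (hQ' : ∀ f, f + 1 < N → Q' f = Q (f + 1)) (hQ'N : Q' (N - 1) = Q 0)
    (S' : ℤ)
    (hS' : S' = ∑ h ∈ Finset.range N, Q' h * ∏ f ∈ Finset.Ico (h + 1) N, (P' f + 1)) :
    (∏ f ∈ Finset.range N, (P' f + 1)) - 1 = K ∧ Int.gcd K S' = Int.gcd K S := by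
  obtain ⟨M, rfl⟩ : ∃ M, N = M + 1 := ⟨N - 1, by omega⟩
  simp only [Nat.add_sub_cancel] at hP'N hQ'N
  set R : ℤ := ∏ f ∈ Finset.Ico 1 (M + 1), (P f + 1) with hR
  -- shift lemma for products over Ico
  have shift : ∀ a : ℕ, a ≤ M →
      (∏ f ∈ Finset.Ico a M, (P (f + 1) + 1)) =
      ∏ f ∈ Finset.Ico (a + 1) (M + 1), (P f + 1) := by
    intro a ha
    rw [Finset.prod_Ico_eq_prod_range, Finset.prod_Ico_eq_prod_range]
    apply Finset.prod_congr (by congr 1; omega)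
    intro i _
    congr 2
    omega
  have hRrange : R = ∏ f ∈ Finset.range M, (P (f + 1) + 1) := by
    rw [hR, ← shift 0 (Nat.zero_le M), Finset.range_eq_Ico]
  have hKR : K + 1 = (P 0 + 1) * R := by
    rw [hK, hRrange, Finset.prod_range_succ' (fun f => P f + 1) M]
    ring
  -- product claim
  have hprodM : (∏ f ∈ Finset.range M, (P' f + 1)) = R := by
    rw [hRrange]
    apply Finset.prod_congr rfl
    intro f hf
    rw [hP' f (by simp at hf; omega)]
  have hprod : (∏ f ∈ Finset.range (M + 1), (P' f + 1)) = K + 1 := by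
    rw [Finset.prod_range_succ, hprodM, hP'N, hKR]; ring
  refine ⟨by rw [hprod]; ring, ?_⟩
  -- key identity: S' = (P 0 + 1) * S - Q 0 * K
  have key : S' = (P 0 + 1) * S + (-Q 0) * K := by
    rw [hS', hS]
    rw [Finset.sum_range_succ, Finset.sum_range_succ' (fun h => Q h * ∏ f ∈ Finset.Ico (h + 1) (M + 1), (P f + 1)) M]
    have hterm : ∀ h ∈ Finset.range M,
        Q' h * ∏ f ∈ Finset.Ico (h + 1) (M + 1), (P' f + 1) =
        (P 0 + 1) * (Q (h + 1) * ∏ f ∈ Finset.Ico (h + 1 + 1) (M + 1), (P f + 1)) := by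
      intro h hh
      simp only [Finset.mem_range] at hh
      rw [hQ' h (by omega)]
      rw [Finset.prod_Ico_succ_top (by omega : h + 1 ≤ M)]
      have : ∀ f ∈ Finset.Ico (h + 1) M, P' f + 1 = P (f + 1) + 1 := by
        intro f hf
        simp only [Finset.mem_Ico] at hf
        rw [hP' f (by omega)]
      rw [Finset.prod_congr rfl this, shift (h + 1) (by omega), hP'N]
      ring
    rw [Finset.sum_congr rfl hterm, ← Finset.mul_sum]
    have htop : (∏ f ∈ Finset.Ico (M + 1) (M + 1), (P' f + 1)) = 1 := by
      simp
    have hT0 : Q 0 * (∏ f ∈ Finset.Ico (0 + 1) (M + 1), (P f + 1)) = Q 0 * R := by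
      rw [hR]
    simp only [hQ'N, htop, hT0]
    have hKval : K = (P 0 + 1) * R - 1 := by linarith [hKR]
    rw [hKval]
    ring
  rw [key, gcd_add_mul_aux]
  have hco : IsCoprime K (P 0 + 1) := by
    refine ⟨-1, R, ?_⟩
    rw [mul_comm R (P 0 + 1), ← hKR]
    ring
  exact gcd_coprime_mul_aux K (P 0 + 1) S hco
end
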